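/- Under the on-the-fly scheduler, if the Active set is empty and the Inactive set is nonempty and contains no process whose next operation is a wildcard receive, then the current global state is a deadlock: no global transition (SR, SR*, or B) is enabled. -/

import Mathlib

/-- Local actions of an MPI process: send to a specific destination, receive
from a specific source, wildcard receive (from any source), or barrier. -/
inductive WAct (n : ℕ) where
  | send (dest : Fin n)
  | recv (src : Fin n)
  | recvAny
  | barrier
deriving DecidableEq

/-- Global actions of the parallel composition with wildcard receives:
`B` (global barrier), `SR i j` (send from `i` matched with the specific
receive at `j`), and `SRW i j` (send from `i` matched with the wildcard
receive at `j`). -/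
inductive WGAct (n : ℕ) where
  | B
  | SR (i j : Fin n)
  | SRW (i j : Fin n)
deriving DecidableEq

variable {n : ℕ} {L : Fin n → Type}

/-- Enabledness of global actions in a global state `σ` (an `n`-tuple of local
states), where `next i` gives the unique next local action of deterministic
process `i` (`none` = terminated). -/
def WEnabled (next : ∀ i, L i → Option (WAct n)) (σ : ∀ i, L i) : WGAct n → Prop
  | .B => ∀ i, next i (σ i) = some .barrier
  | .SR i j => i ≠ j ∧ next i (σ i) = some (.send j) ∧ next j (σ j) = some (.recv i)
  | .SRW i j => i ≠ j ∧ next i (σ i) = some (.send j) ∧ next j (σ j) = some .recvAny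

open scoped Classical in
/-- The global step function: `B` advances all components, while `SR i j` and
`SRW i j` advance exactly components `i` and `j`. -/
noncomputable def wstep (next : ∀ i, L i → Option (WAct n)) (adv : ∀ i, L i → L i) :
    WGAct n → (∀ i, L i) → Option (∀ i, L i)
  | .B, σ => if WEnabled next σ .B then some (fun k => adv k (σ k)) else none
  | .SR i j, σ =>
      if WEnabled next σ (.SR i j) then
        some (Function.update (Function.update σ i (adv i (σ i))) j (adv j (σ j)))
      else none
  | .SRW i j, σ =>
      if WEnabled next σ (.SRW i j) then
        some (Function.update (Function.update σ i (adv i (σ i))) j (adv j (σ j)))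
      else none

/-! Since `Active` is empty, every process that is pending on an operation lies in `Inactive`.
An enabled `SR` would then be a matched send/receive pair inside `Inactive`, and an enabled `SR*`
a wildcard receive inside `Inactive`; `B` is excluded directly. -/

section Deadlock

variable {next : ∀ i, L i → Option (WAct n)} {σ : ∀ i, L i} {Inactive : Finset (Fin n)}

theorem mem_of_next_eq_some (hActiveEmpty : ∀ i : Fin n, i ∈ Inactive ∨ next i (σ i) = none)
    {i : Fin n} {a : WAct n} (h : next i (σ i) = some a) : i ∈ Inactive :=
  (hActiveEmpty i).resolve_right (by simp [h])

theorem not_wEnabled_SR (hActiveEmpty : ∀ i : Fin n, i ∈ Inactive ∨ next i (σ i) = none)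
    (hNoMatch : ∀ i ∈ Inactive, ∀ j ∈ Inactive,
      ¬ (next i (σ i) = some (.send j) ∧ next j (σ j) = some (.recv i)))
    (i j : Fin n) : ¬ WEnabled next σ (.SR i j) := by
  rintro ⟨-, hi, hj⟩
  exact hNoMatch i (mem_of_next_eq_some hActiveEmpty hi) j (mem_of_next_eq_some hActiveEmpty hj)
    ⟨hi, hj⟩

theorem not_wEnabled_SRW (hActiveEmpty : ∀ i : Fin n, i ∈ Inactive ∨ next i (σ i) = none)
    (hNoWildcard : ∀ i ∈ Inactive, next i (σ i) ≠ some .recvAny)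
    (i j : Fin n) : ¬ WEnabled next σ (.SRW i j) := by
  rintro ⟨-, -, hj⟩
  exact hNoWildcard j (mem_of_next_eq_some hActiveEmpty hj) hj

end Deadlock

/-- under the on-the-fly scheduler, suppose the `Active` set is
empty (so every process is either in `Inactive` or has terminated), `Inactive`
is nonempty, every process in `Inactive` is pending on some operation that is
not a wildcard receive, the scheduler's matching check has been exhaustively
applied (no send among `Inactive` processes has its matching receive pending
among `Inactive` processes), and not all processes are pending at a barrier.
Then the current global state is a deadlock: no global transition (`SR`,
`SR*`, or `B`) is enabled, while some process has not terminated. -/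
theorem stmt19 (next : ∀ i, L i → Option (WAct n)) (σ : ∀ i, L i)
    (Inactive : Finset (Fin n))
    (hActiveEmpty : ∀ i : Fin n, i ∈ Inactive ∨ next i (σ i) = none)
    (hNonempty : Inactive.Nonempty)
    (hPending : ∀ i ∈ Inactive, (next i (σ i)).isSome)
    (hNoWildcard : ∀ i ∈ Inactive, next i (σ i) ≠ some .recvAny)
    (hNoMatch : ∀ i ∈ Inactive, ∀ j ∈ Inactive,
      ¬ (next i (σ i) = some (.send j) ∧ next j (σ j) = some (.recv i)))
    (hNotAllBarrier : ¬ ∀ i : Fin n, next i (σ i) = some .barrier) :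
    (∀ g : WGAct n, ¬ WEnabled next σ g) ∧ ∃ i : Fin n, (next i (σ i)).isSome := by
  refine ⟨?_, hNonempty.elim fun i hi => ⟨i, hPending i hi⟩⟩
  rintro (_ | ⟨i, j⟩ | ⟨i, j⟩)
  · exact hNotAllBarrier
  · exact not_wEnabled_SR hActiveEmpty hNoMatch i j
  · exact not_wEnabled_SRW hActiveEmpty hNoWildcard i j
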